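/- Let p00, p11 ∈ [0,1] with p00 + p11 ≤ 1, and let N00, N01, N10, N11 be nonnegative integers. Define L(p00,p11) = (1−p11)^N00 · p11^N01 · p00^N10 · (1−p00)^N11. If N00·N11 ≥ N01·N10 and all the denominators below are positive, then L is maximized over the region {(p00,p11) : p00 ≥ 0, p11 ≥ 0, p00 + p11 ≤ 1} at p00 = N10/(N10+N11) and p11 = N01/(N00+N01). -/

import Mathlib

/-!
The likelihood is the product of two Bernoulli likelihoods, `(1 - p₁₁)^N₀₀ p₁₁^N₀₁` and
`p₀₀^N₁₀ (1 - p₀₀)^N₁₁`, and each factor is maximised on `[0, 1]` by its empirical frequency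
(weighted AM-GM), so the two factors can be bounded independently.
-/

namespace Real

/-- Nonnegativity of the Kullback–Leibler divergence between Bernoulli distributions, in
multiplicative form. -/
theorem div_rpow_mul_one_sub_div_rpow_le_one {p q : ℝ} (hp₀ : 0 ≤ p) (hp₁ : p ≤ 1)
    (hq₀ : 0 < q) (hq₁ : q < 1) :
    (p / q) ^ q * ((1 - p) / (1 - q)) ^ (1 - q) ≤ 1 := by
  have hq₁' : 0 < 1 - q := sub_pos.2 hq₁
  calc (p / q) ^ q * ((1 - p) / (1 - q)) ^ (1 - q)
      ≤ q * (p / q) + (1 - q) * ((1 - p) / (1 - q)) :=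
        geom_mean_le_arith_mean2_weighted hq₀.le hq₁'.le (by positivity)
          (div_nonneg (sub_nonneg.2 hp₁) hq₁'.le) (add_sub_cancel q 1)
    _ = 1 := by field_simp; ring

theorem pow_mul_one_sub_pow_le_of_pos {a b : ℕ} (ha : 0 < a) (hb : 0 < b) {p : ℝ}
    (hp₀ : 0 ≤ p) (hp₁ : p ≤ 1) :
    p ^ a * (1 - p) ^ b ≤ ((a : ℝ) / (a + b)) ^ a * (1 - (a : ℝ) / (a + b)) ^ b := by
  set q : ℝ := a / (a + b) with hq
  have hn : (0 : ℝ) < a + b := by positivity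
  have hq₀ : 0 < q := by positivity
  have hq₁ : q < 1 := by rw [hq, div_lt_one hn]; exact_mod_cast Nat.lt_add_of_pos_right hb
  have hq₁' : 0 < 1 - q := sub_pos.2 hq₁
  have hqa : q * (a + b) = a := by rw [hq]; field_simp
  have hqb : (1 - q) * (a + b) = b := by rw [sub_mul, hqa, one_mul]; ring
  have hratio : (p / q) ^ a * ((1 - p) / (1 - q)) ^ b ≤ 1 := by
    have h := rpow_le_rpow (by positivity) (div_rpow_mul_one_sub_div_rpow_le_one hp₀ hp₁ hq₀ hq₁)
      hn.le
    have h1p : 0 ≤ (1 - p) / (1 - q) := div_nonneg (sub_nonneg.2 hp₁) hq₁'.le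
    rwa [one_rpow, mul_rpow (by positivity) (by positivity), ← rpow_mul (by positivity),
      ← rpow_mul h1p, hqa, hqb, rpow_natCast, rpow_natCast] at h
  rwa [div_pow p q, div_pow (1 - p), div_mul_div_comm, div_le_one (by positivity)] at hratio

/-- When `a + b = 0` the division gives `0` and both sides are `1`. -/
theorem pow_mul_one_sub_pow_le (a b : ℕ) {p : ℝ} (hp₀ : 0 ≤ p) (hp₁ : p ≤ 1) :
    p ^ a * (1 - p) ^ b ≤ ((a : ℝ) / (a + b)) ^ a * (1 - (a : ℝ) / (a + b)) ^ b := by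
  rcases Nat.eq_zero_or_pos a with rfl | ha
  · simpa using pow_le_one₀ (sub_nonneg.2 hp₁) (by linarith)
  rcases Nat.eq_zero_or_pos b with rfl | hb
  · have : (a : ℝ) / a = 1 := div_self (by positivity)
    simpa [this] using pow_le_one₀ hp₀ hp₁
  exact pow_mul_one_sub_pow_le_of_pos ha hb hp₀ hp₁

end Real

theorem stmt_0_general (N00 N01 N10 N11 : ℕ) :
    ∀ p00 p11 : ℝ, 0 ≤ p00 → 0 ≤ p11 → p00 + p11 ≤ 1 →
      (1 - p11) ^ N00 * p11 ^ N01 * p00 ^ N10 * (1 - p00) ^ N11 ≤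
        (1 - (N01 : ℝ) / (N00 + N01)) ^ N00 * ((N01 : ℝ) / (N00 + N01)) ^ N01 *
          ((N10 : ℝ) / (N10 + N11)) ^ N10 * (1 - (N10 : ℝ) / (N10 + N11)) ^ N11 := by
  intro p00 p11 h00 h11 hsum
  have h₁ := Real.pow_mul_one_sub_pow_le N01 N00 h11 (by linarith)
  have h₀ := Real.pow_mul_one_sub_pow_le N10 N11 h00 (by linarith)
  rw [add_comm (N01 : ℝ)] at h₁
  calc (1 - p11) ^ N00 * p11 ^ N01 * p00 ^ N10 * (1 - p00) ^ N11
      = (p11 ^ N01 * (1 - p11) ^ N00) * (p00 ^ N10 * (1 - p00) ^ N11) := by ring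
    _ ≤ (((N01 : ℝ) / (N00 + N01)) ^ N01 * (1 - (N01 : ℝ) / (N00 + N01)) ^ N00) *
          (((N10 : ℝ) / (N10 + N11)) ^ N10 * (1 - (N10 : ℝ) / (N10 + N11)) ^ N11) :=
        mul_le_mul_of_nonneg h₁ h₀ (mul_nonneg (pow_nonneg h11 _) (pow_nonneg (by linarith) _))
          ((mul_nonneg (pow_nonneg h00 _) (pow_nonneg (by linarith) _)).trans h₀)
    _ = _ := by ring

theorem stmt_0 (N00 N01 N10 N11 : ℕ)
    (hmono : N01 * N10 ≤ N00 * N11)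
    (hd1 : 0 < N10 + N11) (hd2 : 0 < N00 + N01) :
    ∀ p00 p11 : ℝ, 0 ≤ p00 → 0 ≤ p11 → p00 + p11 ≤ 1 →
      (1 - p11) ^ N00 * p11 ^ N01 * p00 ^ N10 * (1 - p00) ^ N11 ≤
        (1 - (N01 : ℝ) / (N00 + N01)) ^ N00 * ((N01 : ℝ) / (N00 + N01)) ^ N01 *
          ((N10 : ℝ) / (N10 + N11)) ^ N10 * (1 - (N10 : ℝ) / (N10 + N11)) ^ N11 :=
  stmt_0_general N00 N01 N10 N11
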